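/- Removing the entry 1 from a 3-stack-sortable permutation π ∈ S_n (n ≥ 2) and then decreasing each remaining entry by 1 yields a 3-stack-sortable permutation in S_{n-1}. -/

import Mathlib

/-- The stack-sorting map, implemented with a fuel parameter (fuel `l.length`
always suffices since the maximum entry is removed at each level). -/
def stackSortAux : ℕ → List ℕ → List ℕ
  | 0, _ => []
  | _ + 1, [] => []
  | fuel + 1, l =>
      let m := l.foldr max 0
      stackSortAux fuel (l.takeWhile (fun x => x != m)) ++
        stackSortAux fuel ((l.dropWhile (fun x => x != m)).tail) ++ [m]

/-- The stack-sorting map `s`: `s(LmR) = s(L) s(R) m` where `m` is the largest entry. -/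
def stackSort (l : List ℕ) : List ℕ := stackSortAux l.length l

/-!
Deleting the entry `1` and lowering the other entries by one commutes with the stack-sorting
map `s`, so `s³` of the reduced permutation is the reduction of `s³ π = id`. The commutation
splits in two. First, `s` commutes with any strictly increasing relabelling of the entries, since
that preserves the decomposition `L m R` at the maximum. Second, `s` commutes with deleting all
entries below a threshold: in `s (L m R) = s L · s R · m`, either `m` survives and both sides
decompose alike, or every entry of `L m R` (hence of its image) is deleted.
-/

namespace List

theorem foldr_max_append_cons {L R : List ℕ} {m : ℕ} (hL : ∀ x ∈ L, x < m)
    (hR : ∀ x ∈ R, x ≤ m) : (L ++ m :: R).foldr max 0 = m := by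
  refine le_antisymm (max_le_of_forall_le _ _ fun x hx => ?_) (le_max_of_le' 0 (by simp) le_rfl)
  rcases mem_append.1 hx with hx | hx
  · exact (hL x hx).le
  · exact (mem_cons.1 hx).elim le_of_eq (hR x)

theorem exists_eq_append_cons_max {l : List ℕ} (hl : l ≠ []) :
    ∃ L m R, l = L ++ m :: R ∧ (∀ x ∈ L, x < m) ∧ ∀ x ∈ R, x ≤ m := by
  have hmem : l.foldr max 0 ∈ l := maximum_mem (foldr_max_of_ne_nil hl).symm
  have hle : ∀ x ∈ l, x ≤ l.foldr max 0 := fun x hx => le_max_of_le' 0 hx le_rfl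
  obtain ⟨L, R, hLR, hm⟩ := eq_append_cons_of_mem hmem
  refine ⟨L, _, R, hLR, fun x hx => (hle x (hLR ▸ mem_append_left _ hx)).lt_of_ne ?_,
    fun x hx => hle x (hLR ▸ mem_append_right _ (mem_cons_of_mem _ hx))⟩
  rintro rfl
  exact hm hx

theorem induction_on_max_split {P : List ℕ → Prop} (nil : P [])
    (append_cons : ∀ L m R, (∀ x ∈ L, x < m) → (∀ x ∈ R, x ≤ m) → P L → P R →
      P (L ++ m :: R)) (l : List ℕ) : P l := by
  induction hn : l.length using Nat.strong_induction_on generalizing l with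
  | _ n ih =>
    rcases eq_or_ne l [] with rfl | hl
    · exact nil
    obtain ⟨L, m, R, rfl, hL, hR⟩ := exists_eq_append_cons_max hl
    have hlen : n = L.length + R.length + 1 := by simp [← hn]; omega
    exact append_cons L m R hL hR (ih _ (by omega) L rfl) (ih _ (by omega) R rfl)

theorem Nodup.erase_eq_filter_lt {l : List ℕ} (hl : l.Nodup) {a : ℕ}
    (ha : ∀ x ∈ l, a ≤ x) : l.erase a = l.filter (a < ·) := by
  rw [hl.erase_eq_filter]
  refine filter_congr fun x hx => ?_
  have := ha x hx
  rw [Bool.eq_iff_iff, bne_iff_ne, decide_eq_true_iff]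
  omega

theorem map_sub_one_filter_range' (n : ℕ) :
    ((range' 1 n).filter (1 < ·)).map (· - 1) = range' 1 (n - 1) := by
  cases n with
  | zero => rfl
  | succ k =>
    rw [range'_succ, filter_cons_of_neg (by simp),
      filter_eq_self.2 fun x hx => by simp at hx ⊢; omega,
      map_sub_range' (by omega)]
    rfl

end List

theorem stackSortAux_nil (fuel : ℕ) : stackSortAux fuel [] = [] := by cases fuel <;> rfl

theorem stackSortAux_succ_append_cons (fuel : ℕ) {L R : List ℕ} {m : ℕ}
    (hL : ∀ x ∈ L, x < m) (hR : ∀ x ∈ R, x ≤ m) :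
    stackSortAux (fuel + 1) (L ++ m :: R) =
      stackSortAux fuel L ++ stackSortAux fuel R ++ [m] := by
  have hunfold : ∀ l : List ℕ, l ≠ [] → stackSortAux (fuel + 1) l =
      stackSortAux fuel (l.takeWhile (· != l.foldr max 0)) ++
        stackSortAux fuel ((l.dropWhile (· != l.foldr max 0)).tail) ++ [l.foldr max 0] := by
    rintro (_ | _) h
    · exact absurd rfl h
    · rfl
  have hne : ∀ x ∈ L, (x != m) = true := fun x hx => bne_iff_ne.2 (hL x hx).ne
  rw [hunfold _ (by simp), List.foldr_max_append_cons hL hR, List.takeWhile_append_of_pos hne,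
    List.dropWhile_append_of_pos hne]
  simp

theorem stackSortAux_of_length_le (l : List ℕ) {fuel : ℕ} (h : l.length ≤ fuel) :
    stackSortAux fuel l = stackSort l := by
  unfold stackSort
  induction l using List.induction_on_max_split generalizing fuel with
  | nil => simp only [stackSortAux_nil]
  | append_cons L m R hL hR ihL ihR =>
    obtain ⟨f, rfl⟩ : ∃ f, fuel = f + 1 := ⟨fuel - 1, by simp at h; omega⟩
    have hlen : (L ++ m :: R).length = L.length + R.length + 1 := by simp; omega
    simp only [hlen] at h ⊢
    rw [stackSortAux_succ_append_cons _ hL hR, stackSortAux_succ_append_cons _ hL hR,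
      ihL (fuel := f) (by omega), ihR (fuel := f) (by omega),
      ihL (fuel := L.length + R.length) (by omega), ihR (fuel := L.length + R.length) (by omega)]

theorem stackSort_nil : stackSort [] = [] := rfl

theorem stackSort_append_cons {L R : List ℕ} {m : ℕ} (hL : ∀ x ∈ L, x < m)
    (hR : ∀ x ∈ R, x ≤ m) :
    stackSort (L ++ m :: R) = stackSort L ++ stackSort R ++ [m] := by
  have hlen : (L ++ m :: R).length = L.length + R.length + 1 := by simp; omega
  rw [stackSort, hlen, stackSortAux_succ_append_cons _ hL hR,
    stackSortAux_of_length_le L (by omega), stackSortAux_of_length_le R (by omega)]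

theorem stackSort_perm (l : List ℕ) : (stackSort l).Perm l := by
  induction l using List.induction_on_max_split with
  | nil => rfl
  | append_cons L m R hL hR ihL ihR =>
    rw [stackSort_append_cons hL hR, List.append_assoc]
    exact ihL.append ((List.perm_append_singleton _ _).trans (ihR.cons m))

theorem stackSort_map {f : ℕ → ℕ} {s : Set ℕ} (hf : StrictMonoOn f s) {l : List ℕ}
    (hl : ∀ x ∈ l, x ∈ s) : stackSort (l.map f) = (stackSort l).map f := by
  induction l using List.induction_on_max_split with
  | nil => rfl
  | append_cons L m R hL hR ihL ihR =>
    simp only [List.mem_append, List.mem_cons] at hl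
    have hms : m ∈ s := hl m (by simp)
    have hLf : ∀ y ∈ L.map f, y < f m := by
      simp only [List.mem_map]
      rintro _ ⟨x, hx, rfl⟩
      exact hf (hl x (by simp [hx])) hms (hL x hx)
    have hRf : ∀ y ∈ R.map f, y ≤ f m := by
      simp only [List.mem_map]
      rintro _ ⟨x, hx, rfl⟩
      exact hf.monotoneOn (hl x (by simp [hx])) hms (hR x hx)
    rw [List.map_append, List.map_cons, stackSort_append_cons hLf hRf,
      stackSort_append_cons hL hR, ihL fun x hx => hl x (by simp [hx]),
      ihR fun x hx => hl x (by simp [hx])]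
    simp

theorem stackSort_filter {p : ℕ → Bool} (hp : ∀ ⦃x y⦄, x ≤ y → p x → p y) (l : List ℕ) :
    stackSort (l.filter p) = (stackSort l).filter p := by
  induction l using List.induction_on_max_split with
  | nil => rfl
  | append_cons L m R hL hR ihL ihR =>
    rw [stackSort_append_cons hL hR]
    by_cases hm : p m
    · rw [List.filter_append, List.filter_cons_of_pos hm,
        stackSort_append_cons (fun x hx => hL x (List.mem_of_mem_filter hx))
          (fun x hx => hR x (List.mem_of_mem_filter hx)), ihL, ihR]
      simp [hm]
    · have hfalse : ∀ l' : List ℕ, (∀ x ∈ l', x ≤ m) → l'.filter p = [] := fun l' h =>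
        List.filter_eq_nil_iff.2 fun x hx hpx => hm (hp (h x hx) hpx)
      rw [hfalse, hfalse, stackSort_nil]
      · simp only [List.mem_append, List.mem_singleton]
        rintro x ((hx | hx) | rfl)
        · exact (hL x ((stackSort_perm L).mem_iff.1 hx)).le
        · exact hR x ((stackSort_perm R).mem_iff.1 hx)
        · exact le_rfl
      · simp only [List.mem_append, List.mem_cons]
        rintro x (hx | rfl | hx)
        exacts [(hL x hx).le, le_rfl, hR x hx]

theorem stackSort_commute_map_filter {p : ℕ → Bool} (hp : ∀ ⦃x y⦄, x ≤ y → p x → p y)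
    {f : ℕ → ℕ} (hf : StrictMonoOn f {x | p x}) :
    Function.Commute (fun l => (l.filter p).map f) stackSort := fun l => by
  rw [stackSort_map hf fun x hx => List.of_mem_filter hx, stackSort_filter hp]

theorem stmt8_general (n : ℕ) (π : List ℕ)
    (hπ : List.Perm π (List.range' 1 n))
    (h3 : stackSort^[3] π = List.range' 1 n) :
    List.Perm ((π.erase 1).map (· - 1)) (List.range' 1 (n - 1)) ∧
      stackSort^[3] ((π.erase 1).map (· - 1)) = List.range' 1 (n - 1) := by
  have hcomm : Function.Commute (fun l => (l.filter (1 < ·)).map (· - 1)) stackSort :=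
    stackSort_commute_map_filter (fun x y hxy hx => by simp at hx ⊢; omega)
      fun x hx y hy hxy => by simp at hx hy; omega
  have herase : π.erase 1 = π.filter (1 < ·) :=
    (hπ.nodup_iff.2 List.nodup_range').erase_eq_filter_lt fun x hx => by
      simpa using (List.mem_range'_1.1 (hπ.subset hx)).1
  rw [herase, ← List.map_sub_one_filter_range']
  exact ⟨(hπ.filter _).map _, by rw [← hcomm.iterate_right 3 π, h3]⟩

/-- Removing the entry `1` from a 3-stack-sortable permutation `π ∈ S_n` (`n ≥ 2`)
and decreasing each remaining entry by `1` yields a 3-stack-sortable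
permutation in `S_{n-1}`. -/
theorem stmt8 (n : ℕ) (hn : 2 ≤ n) (π : List ℕ)
    (hπ : List.Perm π (List.range' 1 n))
    (h3 : stackSort^[3] π = List.range' 1 n) :
    List.Perm ((π.erase 1).map (· - 1)) (List.range' 1 (n - 1)) ∧
      stackSort^[3] ((π.erase 1).map (· - 1)) = List.range' 1 (n - 1) :=
  stmt8_general n π hπ h3
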